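/- arXiv:1409.3560 — 6 statements merged into one kernel-verified Lean document; each statement's English description precedes it below -/
import Mathlib

section
/- Let t : ℝ × ℝ → ℝ be continuous and let a ≤ b, c ≤ d be reals. Then the bounded ∀∃-sentence '∀ x ∈ [a,b], ∃ y ∈ [c,d], t(x,y) > 0' is true if and only if the real number inf_{x ∈ [a,b]} sup_{y ∈ [c,d]} t(x,y) is strictly positive. -/
open Set

theorem IsCompact.lt_sSup_iff_of_continuous {α β : Type*} [ConditionallyCompleteLinearOrder α]
    [TopologicalSpace α] [ClosedIciTopology α] [TopologicalSpace β] {f : β → α} {K : Set β}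
    (hK : IsCompact K) (h0K : K.Nonempty) (hf : ContinuousOn f K) (y : α) :
    y < sSup (f '' K) ↔ ∃ x ∈ K, y < f x := by
  rw [lt_csSup_iff (hK.bddAbove_image hf) (h0K.image f), exists_mem_image]

/-- For a continuous `t : ℝ × ℝ → ℝ` and nonempty compact intervals `[a,b]`, `[c,d]`,
the bounded `∀∃`-sentence `∀ x ∈ [a,b], ∃ y ∈ [c,d], t (x, y) > 0` is true iff
`inf_{x ∈ [a,b]} sup_{y ∈ [c,d]} t (x, y) > 0`. -/
theorem forall_exists_pos_iff_infSup_pos (t : ℝ × ℝ → ℝ) (ht : Continuous t)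
    (a b c d : ℝ) (hab : a ≤ b) (hcd : c ≤ d) :
    (∀ x ∈ Set.Icc a b, ∃ y ∈ Set.Icc c d, t (x, y) > 0) ↔
      0 < sInf ((fun x => sSup ((fun y => t (x, y)) '' Set.Icc c d)) '' Set.Icc a b) := by
  -- Continuity of the inner supremum makes the outer infimum attained, so `0 < inf` is pointwise.
  have hsup : Continuous fun x => sSup ((fun y => t (x, y)) '' Icc c d) :=
    isCompact_Icc.continuous_sSup (f := fun x y => t (x, y)) ht
  rw [isCompact_Icc.lt_sInf_iff_of_continuous (nonempty_Icc.2 hab) hsup.continuousOn]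
  refine forall₂_congr fun x _ => ?_
  exact (isCompact_Icc.lt_sSup_iff_of_continuous (f := fun y => t (x, y)) (nonempty_Icc.2 hcd)
    (by fun_prop) 0).symm
end

section
/- (Lyapunov's stability theorem, the implication φ_L → φ_S of the paper.) Let f : ℝⁿ → ℝⁿ be continuous with f(0) = 0, and let U be an open neighborhood of the origin. Suppose V : ℝⁿ → ℝ is continuously differentiable on U with V(0) = 0, V(x) > 0 for every x ∈ U \ {0}, and the derivative of V along f is nonpositive on U, i.e. ⟪∇V(x), f(x)⟫ ≤ 0 for all x ∈ U. Then the origin is stable in the sense of Lyapunov for the system ẋ = f(x): for every ε > 0 there exists δ > 0 such that every differentiable function x : [0,∞) → ℝⁿ satisfying x′(t) = f(x(t)) for all t ≥ 0 and ‖x(0)‖ < δ satisfies ‖x(t)‖ < ε for all t ≥ 0. -/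
open RealInnerProductSpace Set Metric

/-!
Pick `r ≤ ε` with `closedBall 0 r ⊆ U`, let `m > 0` be the minimum of `V` on the sphere of
radius `r`, and choose `δ ≤ r` with `V < m` on `ball 0 δ`. As long as a trajectory stays in
`closedBall 0 r ⊆ U`, the value of `V` along it does not increase, so it stays below `m` and
the trajectory can never reach the sphere: it is trapped in `ball 0 r`.
-/

theorem HasGradientAt.comp_hasDerivWithinAt {E : Type*} [NormedAddCommGroup E]
    [InnerProductSpace ℝ E] [CompleteSpace E] {V : E → ℝ} {g : E} {x : ℝ → E} {x' : E}
    {s : Set ℝ} {t : ℝ} (hV : HasGradientAt V g (x t)) (hx : HasDerivWithinAt x x' s t) :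
    HasDerivWithinAt (V ∘ x) ⟪g, x'⟫ s t := by
  simpa [InnerProductSpace.toDual_apply_apply] using
    hV.hasFDerivAt.comp_hasDerivWithinAt t hx

theorem antitoneOn_comp_of_inner_gradient_nonpos {E : Type*} [NormedAddCommGroup E]
    [InnerProductSpace ℝ E] [CompleteSpace E] {V : E → ℝ} {f : E → E} {U : Set E}
    (hU : IsOpen U) (hV : DifferentiableOn ℝ V U) (hVf : ∀ y ∈ U, ⟪gradient V y, f y⟫ ≤ 0)
    {x : ℝ → E} {a b : ℝ} (hx : ∀ t ∈ Icc a b, HasDerivWithinAt x (f (x t)) (Icc a b) t)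
    (hxU : ∀ t ∈ Icc a b, x t ∈ U) : AntitoneOn (V ∘ x) (Icc a b) := by
  have hVx : ∀ t ∈ Icc a b,
      HasDerivWithinAt (V ∘ x) ⟪gradient V (x t), f (x t)⟫ (Icc a b) t := fun t ht =>
    (hV.differentiableAt (hU.mem_nhds (hxU t ht))).hasGradientAt.comp_hasDerivWithinAt (hx t ht)
  refine antitoneOn_of_hasDerivWithinAt_nonpos (f' := fun t => ⟪gradient V (x t), f (x t)⟫)
    (convex_Icc a b) (fun t ht => (hVx t ht).continuousWithinAt) (fun t ht => ?_) (fun t ht => ?_)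
  · exact (hVx t (interior_subset ht)).mono interior_subset
  · exact hVf _ (hxU t (interior_subset ht))

theorem ContinuousOn.forall_lt_of_ne_at_first_hit {g : ℝ → ℝ} {a r : ℝ}
    (hg : ContinuousOn g (Ici a)) (ha : g a < r)
    (hhit : ∀ t > a, (∀ s ∈ Icc a t, g s ≤ r) → g t ≠ r) : ∀ t ≥ a, g t < r := by
  intro t ht
  by_contra! hrt
  set A := Ici a ∩ g ⁻¹' Ici r
  have hA : IsClosed A := hg.preimage_isClosed_of_isClosed isClosed_Ici isClosed_Ici
  have hbdd : BddBelow A := ⟨a, fun s hs => hs.1⟩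
  have hmem : sInf A ∈ A := hA.csInf_mem ⟨t, ht, hrt⟩ hbdd
  -- the first time `g` reaches `r`
  set t₀ := sInf A
  have below : ∀ s ∈ Ico a t₀, g s < r := fun s hs =>
    lt_of_not_ge fun h => (csInf_le hbdd ⟨hs.1, h⟩).not_gt hs.2
  have ht₀ : a < t₀ := by
    refine hmem.1.lt_of_ne fun h => ?_
    rw [← h] at hmem
    exact (hmem.2.trans_lt ha).false
  have hle : g t₀ ≤ r :=
    ContinuousWithinAt.closure_le (by simp [closure_Ico ht₀.ne, ht₀.le])
      ((hg t₀ hmem.1).mono Ico_subset_Ici_self) continuousWithinAt_const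
      (fun s hs => (below s hs).le)
  refine hhit t₀ ht₀ (fun s hs => ?_) (hle.antisymm hmem.2)
  rcases hs.2.lt_or_eq with h | rfl
  · exact (below s ⟨hs.1, h⟩).le
  · exact hle

theorem lyapunov_stability_general (n : ℕ)
    (f : EuclideanSpace ℝ (Fin n) → EuclideanSpace ℝ (Fin n))
    (U : Set (EuclideanSpace ℝ (Fin n))) (hU : IsOpen U) (hU0 : (0 : EuclideanSpace ℝ (Fin n)) ∈ U)
    (V : EuclideanSpace ℝ (Fin n) → ℝ)
    (hV : ContDiffOn ℝ 1 V U)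
    (hV0 : V 0 = 0)
    (hVpos : ∀ x ∈ U \ {0}, 0 < V x)
    (hVdec : ∀ x ∈ U, ⟪gradient V x, f x⟫ ≤ 0) :
    ∀ ε > 0, ∃ δ > 0,
      ∀ x : ℝ → EuclideanSpace ℝ (Fin n),
        (∀ t : ℝ, 0 ≤ t → HasDerivWithinAt x (f (x t)) (Set.Ici 0) t) →
        ‖x 0‖ < δ → ∀ t : ℝ, 0 ≤ t → ‖x t‖ < ε := by
  intro ε hε
  obtain ⟨r', hr', hball⟩ := isOpen_iff.1 hU 0 hU0
  set r := min (r' / 2) ε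
  have hr : 0 < r := lt_min (half_pos hr') hε
  have hclosedBall : closedBall 0 r ⊆ U :=
    (closedBall_subset_ball ((min_le_left _ _).trans_lt (half_lt_self hr'))).trans hball
  have hVc : ContinuousOn V U := hV.continuousOn
  obtain ⟨m, hm, hmV⟩ := (isCompact_sphere (0 : EuclideanSpace ℝ (Fin n)) r).exists_forall_le'
    (hVc.mono (sphere_subset_closedBall.trans hclosedBall))
    (fun y hy => hVpos y ⟨hclosedBall (sphere_subset_closedBall hy), ne_of_mem_sphere hy hr.ne'⟩)
  obtain ⟨δ, hδ, hδV⟩ := Metric.mem_nhds_iff.1 ((hVc.continuousAt (hU.mem_nhds hU0)).preimage_mem_nhds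
    (Iio_mem_nhds (hV0 ▸ hm)))
  refine ⟨min δ r, lt_min hδ hr, fun x hx hx0 t ht => ?_⟩
  have hxc : ContinuousOn x (Ici 0) := fun s hs => (hx s hs).continuousWithinAt
  have hVx0 : V (x 0) < m := hδV (mem_ball_zero_iff.2 (hx0.trans_le (min_le_left _ _)))
  refine (hxc.norm.forall_lt_of_ne_at_first_hit (hx0.trans_le (min_le_right _ _))
    (fun T hT hle hTr => ?_) t ht).trans_le (min_le_right _ _)
  have hVT : V (x T) ≤ V (x 0) :=
    antitoneOn_comp_of_inner_gradient_nonpos hU (hV.differentiableOn one_ne_zero) hVdec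
      (fun s hs => (hx s hs.1).mono Icc_subset_Ici_self)
      (fun s hs => hclosedBall (mem_closedBall_zero_iff.2 (hle s hs)))
      (left_mem_Icc.2 hT.le) (right_mem_Icc.2 hT.le) hT.le
  exact (hmV (x T) (mem_sphere_zero_iff_norm.2 hTr)).not_gt (hVT.trans_lt hVx0)

/-- Lyapunov's stability theorem (the implication `φ_L → φ_S`): if `V` is a
continuously differentiable Lyapunov function for `ẋ = f(x)` on an open
neighborhood `U` of the origin (`V 0 = 0`, `V > 0` on `U \ {0}`, and
`⟪∇V x, f x⟫ ≤ 0` on `U`), then the origin is stable in the sense of Lyapunov. -/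
theorem lyapunov_stability (n : ℕ)
    (f : EuclideanSpace ℝ (Fin n) → EuclideanSpace ℝ (Fin n))
    (hf : Continuous f) (hf0 : f 0 = 0)
    (U : Set (EuclideanSpace ℝ (Fin n))) (hU : IsOpen U) (hU0 : (0 : EuclideanSpace ℝ (Fin n)) ∈ U)
    (V : EuclideanSpace ℝ (Fin n) → ℝ)
    (hV : ContDiffOn ℝ 1 V U)
    (hV0 : V 0 = 0)
    (hVpos : ∀ x ∈ U \ {0}, 0 < V x)
    (hVdec : ∀ x ∈ U, ⟪gradient V x, f x⟫ ≤ 0) :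
    ∀ ε > 0, ∃ δ > 0,
      ∀ x : ℝ → EuclideanSpace ℝ (Fin n),
        (∀ t : ℝ, 0 ≤ t → HasDerivWithinAt x (f (x t)) (Set.Ici 0) t) →
        ‖x 0‖ < δ → ∀ t : ℝ, 0 ≤ t → ‖x t‖ < ε :=
  lyapunov_stability_general n f U hU hU0 V hV hV0 hVpos hVdec
end

section
/- (Kalman controllability test, sufficiency.) Let A be an n×n real matrix and B an n×m real matrix with n, m ≥ 1. If the column span of the Kalman matrix [B AB ⋯ A^{n−1}B] is all of ℝⁿ (i.e., the Kalman matrix has rank n), then for every T > 0 the linear system ẋ = Ax + Bu is controllable on [0,T]: for all x₀, x₁ ∈ ℝⁿ there exist a continuous control u : ℝ → ℝᵐ and a differentiable x : ℝ → ℝⁿ with x(0) = x₀, x′(t) = A·x(t) + B·u(t) for all t ∈ [0,T], and x(T) = x₁. -/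
/-!
Write `q = ∑ qⱼ Xʲ` for the characteristic polynomial of `A` (monic of degree `N`, `q(A) = 0`)
and put `ζⱼ = (divX^[j] q)(A) B v`. Then `ζ₀ = 0`, `ζ_N = B v` and `A ζⱼ₊₁ = ζⱼ - qⱼ B v`, so for
every polynomial `p` the curve `x = ∑_{j<N} p⁽ʲ⁾ ζⱼ₊₁` solves `ẋ = A x + B u` with the polynomial
control `u = (∑ⱼ qⱼ p⁽ʲ⁾) v` (the derivatives of `p` are the coordinates of the controllability
canonical form). Two-point Hermite interpolation gives `p` whose first `N` derivatives vanish at one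
endpoint and are `δⱼₖ` at the other, so each `ζₖ₊₁` can be steered from `0` and to `0`. The steerable
pairs `(x(0), x(T))` form a subspace, and the span of all `ζⱼ` is `A`-invariant and contains the
range of `B`, hence contains the Kalman span.
-/

open Matrix Polynomial Finset

namespace Polynomial

section CommRing

variable {R : Type*} [CommRing R]

theorem coeff_divX_iterate (q : R[X]) (k i : ℕ) : (divX^[k] q).coeff i = q.coeff (i + k) := by
  induction k generalizing i with
  | zero => rfl
  | succ k ih => rw [Function.iterate_succ_apply', coeff_divX, ih]; ring_nf

theorem X_mul_divX_iterate_succ (q : R[X]) (k : ℕ) :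
    X * divX^[k + 1] q = divX^[k] q - C (q.coeff k) := by
  have h := X_mul_divX_add (divX^[k] q)
  rw [coeff_divX_iterate, zero_add] at h
  rw [Function.iterate_succ_apply', eq_sub_iff_add_eq, h]

theorem Monic.divX_iterate_natDegree {q : R[X]} (hq : q.Monic) : divX^[q.natDegree] q = 1 := by
  ext i
  rw [coeff_divX_iterate, coeff_one]
  rcases Nat.eq_zero_or_pos i with rfl | hi
  · simpa using hq.coeff_natDegree
  · rw [if_neg hi.ne', coeff_eq_zero_of_natDegree_lt (by omega)]

theorem eval_iterate_derivative_eq_zero_of_pow_dvd {p : R[X]} {s : R} {n m : ℕ}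
    (h : (X - C s) ^ n ∣ p) (hm : m < n) : (derivative^[m] p).eval s = 0 :=
  dvd_iff_isRoot.mp <| (dvd_pow_self _ (Nat.sub_ne_zero_of_lt hm)).trans
    (pow_sub_dvd_iterate_derivative_of_pow_dvd m h)

end CommRing

section Field

variable {K : Type*} [Field K]

theorem exists_iterate_derivative_eval_eq_zero_and_eq {s₀ s₁ : K} (hs : s₀ ≠ s₁) (n : ℕ)
    (t : K[X]) :
    ∃ p : K[X], ∀ m < n, (derivative^[m] p).eval s₀ = 0 ∧
      (derivative^[m] p).eval s₁ = (derivative^[m] t).eval s₁ := by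
  obtain ⟨a, b, hab⟩ :=
    (isCoprime_X_sub_C_of_isUnit_sub (sub_ne_zero.mpr hs).isUnit).pow (m := n) (n := n)
  refine ⟨t * a * (X - C s₀) ^ n, fun m hm => ⟨?_, ?_⟩⟩
  · exact eval_iterate_derivative_eq_zero_of_pow_dvd (dvd_mul_left _ _) hm
  · have hp : t * a * (X - C s₀) ^ n = t - t * b * (X - C s₁) ^ n := by
      linear_combination t * hab
    rw [hp, iterate_derivative_sub, eval_sub,
      eval_iterate_derivative_eq_zero_of_pow_dvd (dvd_mul_left _ _) hm, sub_zero]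

theorem eval_iterate_derivative_inv_factorial_mul_X_sub_C_pow [CharZero K] (s : K) (j m : ℕ) :
    (derivative^[m] (C (j.factorial : K)⁻¹ * (X - C s) ^ j)).eval s = if m = j then 1 else 0 := by
  rw [iterate_derivative_C_mul, iterate_derivative_X_sub_pow, eval_mul, eval_C, eval_smul,
    eval_pow, eval_sub, eval_X, eval_C, sub_self, nsmul_eq_mul]
  split_ifs with h
  · subst h
    simp [Nat.descFactorial_self, Nat.factorial_ne_zero]
  · rcases lt_or_gt_of_ne h with h | h
    · simp [zero_pow (Nat.sub_ne_zero_of_lt h)]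
    · simp [Nat.descFactorial_eq_zero_iff_lt.mpr h]

end Field

end Polynomial

namespace Matrix

variable {ι κ : Type*} [Fintype ι] [DecidableEq ι] [Fintype κ]

theorem mulVec_aeval_divX_iterate_succ (A : Matrix ι ι ℝ) (q : ℝ[X]) (k : ℕ) (w : ι → ℝ) :
    A *ᵥ (aeval A (divX^[k + 1] q) *ᵥ w) = aeval A (divX^[k] q) *ᵥ w - q.coeff k • w := by
  have h : A * aeval A (divX^[k + 1] q) = aeval A (X * divX^[k + 1] q) := by
    rw [map_mul, aeval_X]
  rw [mulVec_mulVec, h, X_mul_divX_iterate_succ, map_sub, aeval_C, sub_mulVec,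
    Algebra.algebraMap_eq_smul_one, smul_mulVec, one_mulVec]

theorem mulVec_pow_mulVec_mem_of_forall_aeval_divX_iterate_mem {A : Matrix ι ι ℝ}
    (B : Matrix ι κ ℝ) {q : ℝ[X]} (hq : q.Monic) (hqA : aeval A q = 0)
    {R : Submodule ℝ (ι → ℝ)}
    (hR : ∀ v, ∀ j < q.natDegree, aeval A (divX^[j + 1] q) *ᵥ (B *ᵥ v) ∈ R) (k : ℕ) (v : κ → ℝ) :
    A ^ k *ᵥ (B *ᵥ v) ∈ R := by
  set Z := Submodule.span ℝ
    {w | ∃ j ≤ q.natDegree, ∃ v, w = aeval A (divX^[j] q) *ᵥ (B *ᵥ v)}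
  have hζ : ∀ j ≤ q.natDegree, ∀ v, aeval A (divX^[j] q) *ᵥ (B *ᵥ v) ∈ Z :=
    fun j hj v => Submodule.subset_span ⟨j, hj, v, rfl⟩
  have hB : ∀ v, B *ᵥ v ∈ Z := fun v => by
    simpa [hq.divX_iterate_natDegree] using hζ _ le_rfl v
  have hZR : Z ≤ R := by
    refine Submodule.span_le.mpr ?_
    rintro _ ⟨_ | j, hj, v, rfl⟩
    · simp [hqA]
    · exact hR v j hj
  have hZ_invariant : Z ≤ Z.comap (mulVecLin A) := by
    refine Submodule.span_le.mpr ?_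
    rintro _ ⟨_ | j, hj, v, rfl⟩
    · simp [hqA]
    · rw [SetLike.mem_coe, Submodule.mem_comap, mulVecLin_apply, mulVec_aeval_divX_iterate_succ]
      exact Z.sub_mem (hζ j (by omega) v) (Z.smul_mem _ (hB v))
  refine hZR ?_
  induction k with
  | zero => simpa using hB v
  | succ k ih => simpa [pow_succ', ← mulVec_mulVec] using hZ_invariant ih

end Matrix

section Controllability

variable {ι κ : Type*}

noncomputable def canonicalControl (q : ℝ[X]) (v : κ → ℝ) (p : ℝ[X]) (t : ℝ) : κ → ℝ :=
  (∑ m ∈ range (q.natDegree + 1), q.coeff m * (derivative^[m] p).eval t) • v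

theorem continuous_canonicalControl (q : ℝ[X]) (v : κ → ℝ) (p : ℝ[X]) :
    Continuous (canonicalControl q v p) := by
  unfold canonicalControl
  fun_prop

variable [Fintype ι] [DecidableEq ι] [Fintype κ]

def controllablePairs (A : Matrix ι ι ℝ) (B : Matrix ι κ ℝ) (T : ℝ) :
    Submodule ℝ ((ι → ℝ) × (ι → ℝ)) where
  carrier := {z | ∃ u : ℝ → κ → ℝ, Continuous u ∧ ∃ x : ℝ → ι → ℝ, Differentiable ℝ x ∧
    x 0 = z.1 ∧ (∀ t ∈ Set.Icc 0 T, HasDerivAt x (A *ᵥ x t + B *ᵥ u t) t) ∧ x T = z.2}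
  zero_mem' := ⟨0, continuous_const, 0, differentiable_const 0, rfl,
    fun t _ => by simp, rfl⟩
  add_mem' := by
    rintro ⟨_, _⟩ ⟨_, _⟩ ⟨u, hu, x, hx, rfl, hxd, rfl⟩ ⟨u', hu', x', hx', rfl, hxd', rfl⟩
    refine ⟨u + u', hu.add hu', x + x', hx.add hx', rfl, fun t ht => ?_, rfl⟩
    refine ((hxd t ht).add (hxd' t ht)).congr_deriv ?_
    simp only [Pi.add_apply, mulVec_add]
    abel
  smul_mem' := by
    rintro c ⟨_, _⟩ ⟨u, hu, x, hx, rfl, hxd, rfl⟩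
    refine ⟨c • u, hu.const_smul c, c • x, hx.const_smul c, rfl, fun t ht => ?_, rfl⟩
    refine ((hxd t ht).const_smul c).congr_deriv ?_
    simp only [Pi.smul_apply, mulVec_smul, smul_add]

noncomputable def canonicalTrajectory (A : Matrix ι ι ℝ) (B : Matrix ι κ ℝ) (q : ℝ[X])
    (v : κ → ℝ) (p : ℝ[X]) (t : ℝ) : ι → ℝ :=
  ∑ m ∈ range q.natDegree, (derivative^[m] p).eval t • (aeval A (divX^[m + 1] q) *ᵥ (B *ᵥ v))

theorem hasDerivAt_canonicalTrajectory {A : Matrix ι ι ℝ} (B : Matrix ι κ ℝ) {q : ℝ[X]}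
    (hq : q.Monic) (hqA : aeval A q = 0) (v : κ → ℝ) (p : ℝ[X]) (t : ℝ) :
    HasDerivAt (canonicalTrajectory A B q v p)
      (A *ᵥ canonicalTrajectory A B q v p t + B *ᵥ canonicalControl q v p t) t := by
  set ζ : ℕ → ι → ℝ := fun m => aeval A (divX^[m] q) *ᵥ (B *ᵥ v)
  set d : ℕ → ℝ := fun m => (derivative^[m] p).eval t
  have hderiv : HasDerivAt (canonicalTrajectory A B q v p)
      (∑ m ∈ range q.natDegree, d (m + 1) • ζ (m + 1)) t := by
    refine (HasDerivAt.fun_sum fun m _ =>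
      (Polynomial.hasDerivAt (derivative^[m] p) t).smul_const (ζ (m + 1))).congr_deriv ?_
    simp only [d, Function.iterate_succ_apply']
  have hA : A *ᵥ canonicalTrajectory A B q v p t = ∑ m ∈ range q.natDegree, d m • ζ m
      - ∑ m ∈ range q.natDegree, (q.coeff m * d m) • (B *ᵥ v) := by
    simp only [canonicalTrajectory, mulVec_sum, mulVec_smul, mulVec_aeval_divX_iterate_succ,
      smul_sub, smul_smul, ← sum_sub_distrib, ζ, d, mul_comm]
  have htelescope : ∑ m ∈ range q.natDegree, d (m + 1) • ζ (m + 1)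
      - ∑ m ∈ range q.natDegree, d m • ζ m = d q.natDegree • (B *ᵥ v) := by
    rw [← sum_sub_distrib, sum_range_sub (fun m => d m • ζ m)]
    simp only [ζ, hq.divX_iterate_natDegree, Function.iterate_zero_apply, hqA, map_one,
      one_mulVec, zero_mulVec, smul_zero, sub_zero]
  have hcontrol : B *ᵥ canonicalControl q v p t
      = ∑ m ∈ range q.natDegree, (q.coeff m * d m) • (B *ᵥ v) + d q.natDegree • (B *ᵥ v) := by
    rw [canonicalControl, mulVec_smul, sum_smul, sum_range_succ, hq.coeff_natDegree, one_mul]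
  refine hderiv.congr_deriv ?_
  rw [hA, hcontrol]
  linear_combination (norm := module) htelescope

theorem mk_canonicalTrajectory_mem_controllablePairs {A : Matrix ι ι ℝ} (B : Matrix ι κ ℝ)
    {q : ℝ[X]} (hq : q.Monic) (hqA : aeval A q = 0) (v : κ → ℝ) (p : ℝ[X]) (T : ℝ) :
    (canonicalTrajectory A B q v p 0, canonicalTrajectory A B q v p T) ∈
      controllablePairs A B T :=
  ⟨canonicalControl q v p, continuous_canonicalControl q v p, canonicalTrajectory A B q v p,
    fun t => (hasDerivAt_canonicalTrajectory B hq hqA v p t).differentiableAt, rfl,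
    fun t _ => hasDerivAt_canonicalTrajectory B hq hqA v p t, rfl⟩

theorem exists_canonicalTrajectory_eq_zero_and_eq (A : Matrix ι ι ℝ) (B : Matrix ι κ ℝ)
    (q : ℝ[X]) (v : κ → ℝ) {s₀ s₁ : ℝ} (hs : s₀ ≠ s₁) {j : ℕ} (hj : j < q.natDegree) :
    ∃ p, canonicalTrajectory A B q v p s₀ = 0 ∧
      canonicalTrajectory A B q v p s₁ = aeval A (divX^[j + 1] q) *ᵥ (B *ᵥ v) := by
  obtain ⟨p, hp⟩ := exists_iterate_derivative_eval_eq_zero_and_eq hs q.natDegree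
    (C (j.factorial : ℝ)⁻¹ * (X - C s₁) ^ j)
  refine ⟨p, sum_eq_zero fun m hm => ?_, ?_⟩
  · rw [(hp m (mem_range.mp hm)).1, zero_smul]
  · rw [canonicalTrajectory, sum_eq_single_of_mem j (mem_range.mpr hj) fun m hm hmj => ?_]
    · rw [(hp j hj).2, eval_iterate_derivative_inv_factorial_mul_X_sub_C_pow, if_pos rfl, one_smul]
    · rw [(hp m (mem_range.mp hm)).2, eval_iterate_derivative_inv_factorial_mul_X_sub_C_pow,
        if_neg hmj, zero_smul]

theorem mulVec_pow_mulVec_mem_of_canonicalTrajectory_mem {A : Matrix ι ι ℝ}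
    (B : Matrix ι κ ℝ) {q : ℝ[X]} (hq : q.Monic) (hqA : aeval A q = 0) {s₀ s₁ : ℝ}
    (hs : s₀ ≠ s₁) {R : Submodule ℝ (ι → ℝ)}
    (hR : ∀ v p, canonicalTrajectory A B q v p s₀ = 0 → canonicalTrajectory A B q v p s₁ ∈ R)
    (k : ℕ) (v : κ → ℝ) : A ^ k *ᵥ (B *ᵥ v) ∈ R := by
  refine mulVec_pow_mulVec_mem_of_forall_aeval_divX_iterate_mem B hq hqA (fun v j hj => ?_) k v
  obtain ⟨p, hp₀, hp₁⟩ := exists_canonicalTrajectory_eq_zero_and_eq A B q v hs hj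
  exact hp₁ ▸ hR v p hp₀

end Controllability

theorem kalman_rank_condition_implies_controllable_general (n m : ℕ)
    (A : Matrix (Fin n) (Fin n) ℝ) (B : Matrix (Fin n) (Fin m) ℝ)
    (hK : Submodule.span ℝ
        {w : Fin n → ℝ | ∃ k < n, ∃ v : Fin m → ℝ, w = (A ^ k) *ᵥ (B *ᵥ v)} = ⊤) :
    ∀ T : ℝ, 0 < T → ∀ x₀ x₁ : Fin n → ℝ,
      ∃ u : ℝ → (Fin m → ℝ), Continuous u ∧
        ∃ x : ℝ → (Fin n → ℝ), Differentiable ℝ x ∧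
          x 0 = x₀ ∧
          (∀ t ∈ Set.Icc (0 : ℝ) T, HasDerivAt x (A *ᵥ x t + B *ᵥ u t) t) ∧
          x T = x₁ := by
  intro T hT x₀ x₁
  set S := controllablePairs A B T
  have hq := A.charpoly_monic
  have hqA := A.aeval_self_charpoly
  have hpair := fun v p => mk_canonicalTrajectory_mem_controllablePairs B hq hqA v p T
  have hsteer (R : Submodule ℝ (Fin n → ℝ)) {s₀ s₁ : ℝ} (hs : s₀ ≠ s₁)
      (hR : ∀ v p, canonicalTrajectory A B A.charpoly v p s₀ = 0 →
        canonicalTrajectory A B A.charpoly v p s₁ ∈ R) (y : Fin n → ℝ) : y ∈ R := by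
    have hle : ⊤ ≤ R := by
      rw [← hK, Submodule.span_le]
      rintro _ ⟨k, -, v, rfl⟩
      exact mulVec_pow_mulVec_mem_of_canonicalTrajectory_mem B hq hqA hs hR k v
    exact hle Submodule.mem_top
  have hfrom : (x₀, 0) ∈ S := hsteer (S.comap (LinearMap.inl ℝ _ _)) hT.ne'
    (fun v p hT0 => by simpa [hT0] using hpair v p) x₀
  have hto : (0, x₁) ∈ S := hsteer (S.comap (LinearMap.inr ℝ _ _)) hT.ne
    (fun v p h00 => by simpa [h00] using hpair v p) x₁
  have hsum : (x₀, x₁) ∈ S := by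
    simpa only [Prod.mk_add_mk, add_zero, zero_add] using S.add_mem hfrom hto
  exact hsum

/-- Kalman controllability test, sufficiency: if the column span of the Kalman
matrix `[B AB ⋯ A^(n-1)B]` is all of `ℝⁿ`, then for every `T > 0` the linear
system `ẋ = Ax + Bu` is controllable on `[0,T]`. -/
theorem kalman_rank_condition_implies_controllable (n m : ℕ) (hn : 1 ≤ n) (hm : 1 ≤ m)
    (A : Matrix (Fin n) (Fin n) ℝ) (B : Matrix (Fin n) (Fin m) ℝ)
    (hK : Submodule.span ℝ
        {w : Fin n → ℝ | ∃ k < n, ∃ v : Fin m → ℝ, w = (A ^ k) *ᵥ (B *ᵥ v)} = ⊤) :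
    ∀ T : ℝ, 0 < T → ∀ x₀ x₁ : Fin n → ℝ,
      ∃ u : ℝ → (Fin m → ℝ), Continuous u ∧
        ∃ x : ℝ → (Fin n → ℝ), Differentiable ℝ x ∧
          x 0 = x₀ ∧
          (∀ t ∈ Set.Icc (0 : ℝ) T, HasDerivAt x (A *ᵥ x t + B *ᵥ u t) t) ∧
          x T = x₁ :=
  kalman_rank_condition_implies_controllable_general n m A B hK
end

section
/- (Kalman controllability test, necessity.) Let A be an n×n real matrix and B an n×m real matrix with n, m ≥ 1. If for some T > 0 the linear system ẋ = Ax + Bu is controllable on [0,T] (for all x₀, x₁ ∈ ℝⁿ there exist a continuous control u : ℝ → ℝᵐ and a differentiable x : ℝ → ℝⁿ with x(0) = x₀, x′(t) = A·x(t) + B·u(t) for all t ∈ [0,T], and x(T) = x₁), then the column span of the Kalman matrix [B AB ⋯ A^{n−1}B] is all of ℝⁿ. -/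
/-!
The Kalman span `S` contains `p(A) B v` for every polynomial `p`: by Cayley–Hamilton, `p(A)` is a
combination of `A^k` with `k < n`. Since `exp (s • A)` lies in the closed (finite-dimensional)
subalgebra generated by `A`, it is such a `p(A)`, so `exp (s • A) B v ∈ S`. Along a trajectory of
`ẋ = Ax + Bu`, the curve `exp ((T - t) • A) x(t)` has derivative `exp ((T - t) • A) B u(t) ∈ S`,
hence its increment `x(T) - exp (T • A) x(0)` lies in `S`. Steering `0` to an arbitrary `x₁`
therefore puts every `x₁` in `S`.
-/

open Matrix NormedSpace Polynomial Set

attribute [local instance] Matrix.linftyOpNormedRing Matrix.linftyOpNormedAlgebra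

section Kalman

variable {K : Type*} [CommRing K] {n m : ℕ}

def kalmanSpan (A : Matrix (Fin n) (Fin n) K) (B : Matrix (Fin n) (Fin m) K) :
    Submodule K (Fin n → K) :=
  Submodule.span K {w | ∃ k < n, ∃ v : Fin m → K, w = (A ^ k) *ᵥ (B *ᵥ v)}

theorem aeval_mulVec_mem_kalmanSpan [Nontrivial K] (A : Matrix (Fin n) (Fin n) K)
    (B : Matrix (Fin n) (Fin m) K) (p : K[X]) (v : Fin m → K) :
    aeval A p *ᵥ (B *ᵥ v) ∈ kalmanSpan A B := by
  rcases n.eq_zero_or_pos with rfl | hn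
  · rw [Subsingleton.elim (aeval A p *ᵥ (B *ᵥ v)) 0]
    exact zero_mem _
  have hdeg : (p %ₘ A.charpoly).natDegree < n := by
    have h1 : A.charpoly ≠ 1 := fun h => by
      simpa [h, hn.ne] using A.charpoly_natDegree_eq_dim
    simpa using natDegree_modByMonic_lt p A.charpoly_monic h1
  rw [aeval_eq_aeval_mod_charpoly, aeval_eq_sum_range' hdeg, sum_mulVec]
  refine Submodule.sum_mem _ fun i hi => ?_
  rw [smul_mulVec]
  exact Submodule.smul_mem _ _ (Submodule.subset_span ⟨i, Finset.mem_range.1 hi, v, rfl⟩)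

end Kalman

section MatrixExp

variable {ι : Type*} [Fintype ι] [DecidableEq ι]

theorem exp_smul_mem_adjoin_singleton (s : ℝ) (M : Matrix ι ι ℝ) :
    exp (s • M) ∈ Algebra.adjoin ℝ {M} :=
  exp_mem (R := ℝ) (s := Algebra.adjoin ℝ {M})
    (Subalgebra.toSubmodule (Algebra.adjoin ℝ {M})).closed_of_finiteDimensional
    (Subalgebra.smul_mem _ (Algebra.self_mem_adjoin_singleton ℝ M) s)

theorem hasDerivAt_exp_sub_smul_mulVec (A : Matrix ι ι ℝ) (c : ℝ) {x : ℝ → ι → ℝ}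
    {x' : ι → ℝ} {t : ℝ} (hx : HasDerivAt x x' t) :
    HasDerivAt (fun s => exp ((c - s) • A) *ᵥ x s) (exp ((c - t) • A) *ᵥ (x' - A *ᵥ x t)) t := by
  have hE : HasDerivAt (fun s : ℝ => exp ((c - s) • A)) (-(exp ((c - t) • A) * A)) t := by
    have := (hasDerivAt_exp_smul_const A (c - t)).scomp t ((hasDerivAt_id t).const_sub c)
    simp only [Function.comp_def, neg_one_smul] at this
    exact this
  let mulVecCLM : Matrix ι ι ℝ →L[ℝ] (ι → ℝ) →L[ℝ] ι → ℝ :=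
    LinearMap.toContinuousLinearMap
      (LinearMap.toContinuousLinearMap.toLinearMap ∘ₗ mulVecBilin ℝ ℝ)
  refine (mulVecCLM.hasDerivAt_of_bilinear (fun _ => hE) (fun _ => hx)).congr_deriv ?_
  change _ *ᵥ x' + (-(_ * A)) *ᵥ x t = _
  rw [neg_mulVec, ← mulVec_mulVec, mulVec_sub, ← sub_eq_add_neg]

end MatrixExp

theorem sub_mem_of_hasDerivAt_mem {E : Type*} [NormedAddCommGroup E] [NormedSpace ℝ E]
    [FiniteDimensional ℝ E] {S : Submodule ℝ E} {h h' : ℝ → E} {a b : ℝ} (hab : a ≤ b)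
    (hh : ∀ t ∈ Icc a b, HasDerivAt h (h' t) t) (hS : ∀ t ∈ Icc a b, h' t ∈ S) :
    h b - h a ∈ S := by
  by_contra hmem
  obtain ⟨f, hf, hSf⟩ := Submodule.exists_le_ker_of_notMem hmem
  let φ := LinearMap.toContinuousLinearMap f
  have hderiv : ∀ t ∈ Icc a b, HasDerivAt (fun s => φ (h s)) 0 t := fun t ht => by
    simpa [φ, Function.comp_def] using
      φ.hasFDerivAt.comp_hasDerivAt t (hh t ht) |>.congr_deriv (hSf (hS t ht))
  have hconst := constant_of_has_deriv_right_zero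
    (fun t ht => (hderiv t ht).continuousAt.continuousWithinAt)
    (fun t ht => (hderiv t (Ico_subset_Icc_self ht)).hasDerivWithinAt) b (right_mem_Icc.2 hab)
  exact hf (by simpa [φ, sub_eq_zero] using hconst)

section Control

variable {n m : ℕ} (A : Matrix (Fin n) (Fin n) ℝ) (B : Matrix (Fin n) (Fin m) ℝ)

theorem exp_smul_mulVec_mem_kalmanSpan (s : ℝ) (v : Fin m → ℝ) :
    exp (s • A) *ᵥ (B *ᵥ v) ∈ kalmanSpan A B := by
  have hexp := exp_smul_mem_adjoin_singleton s A
  rw [Algebra.adjoin_singleton_eq_range_aeval] at hexp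
  obtain ⟨p, hp⟩ := hexp
  rw [← hp]
  exact aeval_mulVec_mem_kalmanSpan A B p v

theorem mem_kalmanSpan_of_hasDerivAt {T : ℝ} (hT : 0 ≤ T) {u : ℝ → Fin m → ℝ}
    {x : ℝ → Fin n → ℝ} (hx0 : x 0 = 0)
    (hx : ∀ t ∈ Icc 0 T, HasDerivAt x (A *ᵥ x t + B *ᵥ u t) t) :
    x T ∈ kalmanSpan A B := by
  have hincr := sub_mem_of_hasDerivAt_mem hT
    (fun t ht => hasDerivAt_exp_sub_smul_mulVec A T (hx t ht))
    (fun t _ => by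
      rw [add_sub_cancel_left]
      exact exp_smul_mulVec_mem_kalmanSpan A B (T - t) (u t))
  simpa [hx0] using hincr

end Control

theorem controllable_implies_kalman_rank_condition_general (n m : ℕ)
    (A : Matrix (Fin n) (Fin n) ℝ) (B : Matrix (Fin n) (Fin m) ℝ)
    (T : ℝ) (hT : 0 < T)
    (hctrl : ∀ x₀ x₁ : Fin n → ℝ,
      ∃ u : ℝ → (Fin m → ℝ), Continuous u ∧
        ∃ x : ℝ → (Fin n → ℝ), Differentiable ℝ x ∧
          x 0 = x₀ ∧
          (∀ t ∈ Set.Icc (0 : ℝ) T, HasDerivAt x (A *ᵥ x t + B *ᵥ u t) t) ∧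
          x T = x₁) :
    Submodule.span ℝ
        {w : Fin n → ℝ | ∃ k < n, ∃ v : Fin m → ℝ, w = (A ^ k) *ᵥ (B *ᵥ v)} = ⊤ := by
  refine eq_top_iff.2 fun x₁ _ => ?_
  obtain ⟨u, -, x, -, hx0, hx, rfl⟩ := hctrl 0 x₁
  exact mem_kalmanSpan_of_hasDerivAt A B hT.le hx0 hx

/-- Kalman controllability test, necessity: if for some `T > 0` the linear system
`ẋ = Ax + Bu` is controllable on `[0,T]`, then the column span of the Kalman
matrix `[B AB ⋯ A^(n-1)B]` is all of `ℝⁿ`. -/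
theorem controllable_implies_kalman_rank_condition (n m : ℕ) (hn : 1 ≤ n) (hm : 1 ≤ m)
    (A : Matrix (Fin n) (Fin n) ℝ) (B : Matrix (Fin n) (Fin m) ℝ)
    (T : ℝ) (hT : 0 < T)
    (hctrl : ∀ x₀ x₁ : Fin n → ℝ,
      ∃ u : ℝ → (Fin m → ℝ), Continuous u ∧
        ∃ x : ℝ → (Fin n → ℝ), Differentiable ℝ x ∧
          x 0 = x₀ ∧
          (∀ t ∈ Set.Icc (0 : ℝ) T, HasDerivAt x (A *ᵥ x t + B *ᵥ u t) t) ∧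
          x T = x₁) :
    Submodule.span ℝ
        {w : Fin n → ℝ | ∃ k < n, ∃ v : Fin m → ℝ, w = (A ^ k) *ᵥ (B *ᵥ v)} = ⊤ :=
  controllable_implies_kalman_rank_condition_general n m A B T hT hctrl
end

section
/- Let A be an n×n real matrix with n ≥ 1. For every real t, the matrix exponential exp(t·A) lies in the linear span of the matrix powers {A⁰ = I, A, A², …, A^{n−1}}, i.e. exp(t·A) ∈ Submodule.span ℝ { A^k : 0 ≤ k < n }. -/
/-!
By Cayley–Hamilton, `p(A) = (p mod χ_A)(A)` for every polynomial `p`, so the subalgebra generated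
by `A` is spanned by `I, A, …, A^(n-1)`. Being finite-dimensional, that subalgebra is closed, and
it contains `t • A`, hence also the limit `exp (t • A)` of the exponential series.
-/

open Polynomial

theorem Polynomial.aeval_mem_span_pow_of_degree_lt {R A : Type*} [CommSemiring R] [Semiring A]
    [Algebra R A] {p : R[X]} {m : ℕ} (hp : p.degree < m) (a : A) :
    aeval a p ∈ Submodule.span R {x : A | ∃ k < m, x = a ^ k} := by
  rcases eq_or_ne p 0 with rfl | hp0
  · simp
  rw [aeval_eq_sum_range' ((natDegree_lt_iff_degree_lt hp0).mpr hp)]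
  exact Submodule.sum_mem _ fun k hk =>
    Submodule.smul_mem _ _ (Submodule.subset_span ⟨k, Finset.mem_range.mp hk, rfl⟩)

section

variable {ι R : Type*} [Fintype ι] [DecidableEq ι] [CommRing R] [Nontrivial R]

theorem Matrix.aeval_mem_span_pow (M : Matrix ι ι R) (p : R[X]) :
    aeval M p ∈ Submodule.span R {N : Matrix ι ι R | ∃ k < Fintype.card ι, N = M ^ k} := by
  rw [aeval_eq_aeval_mod_charpoly]
  refine aeval_mem_span_pow_of_degree_lt ?_ M
  rw [← M.charpoly_degree_eq_dim]
  exact degree_modByMonic_lt p M.charpoly_monic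

theorem Matrix.adjoin_le_span_pow (M : Matrix ι ι R) :
    Subalgebra.toSubmodule (Algebra.adjoin R {M}) ≤
      Submodule.span R {N : Matrix ι ι R | ∃ k < Fintype.card ι, N = M ^ k} := by
  rw [Algebra.adjoin_singleton_eq_range_aeval]
  rintro _ ⟨p, rfl⟩
  exact M.aeval_mem_span_pow p

end

theorem exp_smul_mem_span_pow_general (n : ℕ)
    (A : Matrix (Fin n) (Fin n) ℝ) (t : ℝ) :
    NormedSpace.exp (t • A) ∈
      Submodule.span ℝ {M : Matrix (Fin n) (Fin n) ℝ | ∃ k < n, M = A ^ k} := by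
  have hclosed : IsClosed (Algebra.adjoin ℝ {A} : Set (Matrix (Fin n) (Fin n) ℝ)) :=
    (Subalgebra.toSubmodule (Algebra.adjoin ℝ {A})).closed_of_finiteDimensional
  have hexp : NormedSpace.exp (t • A) ∈ Algebra.adjoin ℝ {A} :=
    NormedSpace.exp_mem (R := ℝ) hclosed
      (Subalgebra.smul_mem _ (Algebra.self_mem_adjoin_singleton ℝ A) t)
  simpa only [Fintype.card_fin] using A.adjoin_le_span_pow hexp

/-- Consequence of the Cayley–Hamilton theorem: for every real `t`, the matrix
exponential `exp (t • A)` lies in the linear span of `{A^0 = I, A, …, A^(n-1)}`. -/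
theorem exp_smul_mem_span_pow (n : ℕ) (hn : 1 ≤ n)
    (A : Matrix (Fin n) (Fin n) ℝ) (t : ℝ) :
    NormedSpace.exp (t • A) ∈
      Submodule.span ℝ {M : Matrix (Fin n) (Fin n) ℝ | ∃ k < n, M = A ^ k} :=
  exp_smul_mem_span_pow_general n A t
end

section
/- Let A be an n×n complex matrix such that every eigenvalue μ of A (every element of the spectrum of A over ℂ) satisfies Re(μ) < 0. Then the matrix exponential exp(t·A) tends to the zero matrix as t → ∞; in particular, for every initial state x₀ ∈ ℂⁿ, the solution x(t) = exp(t·A) *ᵥ x₀ of the linear system ẋ = Ax converges to 0 as t → ∞. -/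
/-!
ℂⁿ is the sum of the generalized eigenspaces of `A`. If `(A - μ)^k x = 0`, the exponential series
of `t (A - μ)` applied to `x` is finite, so `exp (t A) x = e^{tμ} ∑_{j<k} t^j/j! (A - μ)^j x`:
polynomials in `t` times `e^{tμ}`, which decay when `Re μ < 0`. A matrix-valued function tends to
`0` as soon as all its columns do.
-/

open Matrix Filter
open Topology NormedSpace Finset Nat

theorem tendsto_cexp_mul_mul_pow_smul_atTop_nhds_zero {E : Type*} [NormedAddCommGroup E]
    [NormedSpace ℂ E] {μ : ℂ} (hμ : μ.re < 0) (j : ℕ) (v : E) :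
    Tendsto (fun t : ℝ => (Complex.exp (t * μ) * t ^ j) • v) atTop (𝓝 0) := by
  have hlim : Tendsto (fun t : ℝ => t ^ (j : ℝ) * Real.exp (-(-μ.re) * t) * ‖v‖) atTop (𝓝 0) := by
    simpa using
      (tendsto_rpow_mul_exp_neg_mul_atTop_nhds_zero j (-μ.re) (by linarith)).mul_const ‖v‖
  refine squeeze_zero_norm' ?_ hlim
  filter_upwards [eventually_ge_atTop 0] with t ht
  rw [norm_smul, norm_mul, Complex.norm_exp, norm_pow, Complex.norm_real, Real.norm_of_nonneg ht,
    Real.rpow_natCast]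
  simp [mul_comm]

section MatrixExp

variable {ι 𝕂 : Type*} [Fintype ι] [DecidableEq ι] [RCLike 𝕂]

theorem Matrix.exp_mulVec_eq_sum_of_pow_mulVec_eq_zero (N : Matrix ι ι 𝕂) {x : ι → 𝕂} {k : ℕ}
    (hx : N ^ k *ᵥ x = 0) : exp N *ᵥ x = ∑ j ∈ range k, (j ! : 𝕂)⁻¹ • (N ^ j *ᵥ x) := by
  open scoped Norms.Operator in
  have hsum := (exp_series_hasSum_exp' (𝕂 := 𝕂) N).map (mulVec.addMonoidHomLeft x)
    (continuous_id.matrix_mulVec continuous_const)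
  refine hsum.unique (hasSum_sum_of_ne_finset_zero (s := range k) fun j hj => ?_) |>.trans ?_
  · have hj : N ^ j *ᵥ x = 0 := by
      rw [← Nat.sub_add_cancel (not_lt.mp (mem_range.not.mp hj)), pow_add, ← mulVec_mulVec, hx,
        mulVec_zero]
    simp [mulVec.addMonoidHomLeft, smul_mulVec, hj]
  · simp [mulVec.addMonoidHomLeft, smul_mulVec]

theorem Matrix.exp_eq_exp_smul_exp_sub_smul_one (A : Matrix ι ι 𝕂) (μ : 𝕂) :
    exp A = exp μ • exp (A - μ • 1) := by
  open scoped Norms.Operator in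
  have hscalar : exp (algebraMap 𝕂 (Matrix ι ι 𝕂) μ) = algebraMap 𝕂 _ (exp μ) :=
    (algebraMap_exp_comm μ).symm
  conv_lhs => rw [← add_sub_cancel (μ • (1 : Matrix ι ι 𝕂)) A]
  rw [exp_add_of_commute _ _ ((Commute.one_left _).smul_left μ),
    ← Algebra.algebraMap_eq_smul_one, hscalar, ← Algebra.smul_def]

end MatrixExp

theorem Module.End.mem_spectrum_of_mem_maxGenEigenspace {R M : Type*} [CommRing R]
    [AddCommGroup M] [Module R M] {f : Module.End R M} {μ : R} {x : M}
    (hx : x ∈ f.maxGenEigenspace μ) (hx0 : x ≠ 0) : μ ∈ spectrum R f :=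
  ((hasUnifEigenvalue_iff_hasUnifEigenvalue_one (by simp)).mp
    ((Submodule.ne_bot_iff _).mpr ⟨x, hx, hx0⟩)).mem_spectrum

namespace Matrix

variable {ι : Type*} [Fintype ι] [DecidableEq ι]

theorem mem_maxGenEigenspace_toLin'_iff {R : Type*} [CommRing R] (A : Matrix ι ι R) (μ : R)
    (x : ι → R) :
    x ∈ Module.End.maxGenEigenspace (toLin' A) μ ↔ ∃ k : ℕ, (A - μ • 1) ^ k *ᵥ x = 0 := by
  have hpow (k : ℕ) : (toLin' A - μ • 1) ^ k = toLinAlgEquiv' ((A - μ • 1) ^ k) := by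
    rw [map_pow, map_sub, map_smul, map_one]; rfl
  simp_rw [Module.End.mem_maxGenEigenspace, hpow, toLinAlgEquiv'_apply]

theorem tendsto_nhds_zero_of_forall_mulVec {α R : Type*} [NonAssocSemiring R]
    [TopologicalSpace R] {l : Filter α} {M : α → Matrix ι ι R}
    (h : ∀ x, Tendsto (fun a => M a *ᵥ x) l (𝓝 0)) : Tendsto M l (𝓝 0) := by
  refine tendsto_pi_nhds.mpr fun i => tendsto_pi_nhds.mpr fun j => ?_
  simpa using tendsto_pi_nhds.mp (h (Pi.single j 1)) i

theorem tendsto_exp_smul_mulVec_of_pow_sub_smul_one_mulVec_eq_zero (A : Matrix ι ι ℂ) {μ : ℂ}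
    (hμ : μ.re < 0) {x : ι → ℂ} {k : ℕ} (hx : (A - μ • 1) ^ k *ᵥ x = 0) :
    Tendsto (fun t : ℝ => exp ((t : ℂ) • A) *ᵥ x) atTop (𝓝 0) := by
  set N := A - μ • 1
  have hexpand (t : ℝ) : exp ((t : ℂ) • A) *ᵥ x =
      ∑ j ∈ range k, (Complex.exp (t * μ) * t ^ j) • ((j ! : ℂ)⁻¹ • (N ^ j *ᵥ x)) := by
    have htN : ((t : ℂ) • N) ^ k *ᵥ x = 0 := by rw [smul_pow, smul_mulVec, hx, smul_zero]
    rw [exp_eq_exp_smul_exp_sub_smul_one _ ((t : ℂ) * μ), ← smul_smul, ← smul_sub, smul_mulVec,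
      exp_mulVec_eq_sum_of_pow_mulVec_eq_zero _ htN, ← Complex.exp_eq_exp_ℂ, smul_sum]
    refine sum_congr rfl fun j _ => ?_
    rw [smul_pow, smul_mulVec, smul_comm _ ((t : ℂ) ^ j), mul_smul]
  simp_rw [hexpand]
  simpa using tendsto_finsetSum (range k) fun j _ =>
    tendsto_cexp_mul_mul_pow_smul_atTop_nhds_zero hμ j ((j ! : ℂ)⁻¹ • (N ^ j *ᵥ x))

theorem tendsto_exp_smul_mulVec_of_spectrum_re_neg (A : Matrix ι ι ℂ)
    (hA : ∀ μ ∈ spectrum ℂ A, μ.re < 0) (x₀ : ι → ℂ) :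
    Tendsto (fun t : ℝ => exp ((t : ℂ) • A) *ᵥ x₀) atTop (𝓝 0) := by
  have hx₀ : x₀ ∈ ⨆ μ, Module.End.maxGenEigenspace (toLin' A) μ := by
    rw [Module.End.iSup_maxGenEigenspace_eq_top]; trivial
  induction hx₀ using Submodule.iSup_induction' with
  | mem μ x hx =>
    rcases eq_or_ne x 0 with rfl | hx0
    · simp
    have hμ : μ ∈ spectrum ℂ A := by
      simpa using Module.End.mem_spectrum_of_mem_maxGenEigenspace hx hx0
    obtain ⟨k, hk⟩ := (mem_maxGenEigenspace_toLin'_iff A μ x).mp hx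
    exact tendsto_exp_smul_mulVec_of_pow_sub_smul_one_mulVec_eq_zero A (hA μ hμ) hk
  | zero => simp
  | add x y _ _ hx hy => simpa [mulVec_add] using hx.add hy

end Matrix

/-- Asymptotic stability of linear systems: if every eigenvalue of the complex
matrix `A` has negative real part, then `exp (t • A) → 0` as `t → ∞`, and in
particular every solution `t ↦ exp (t • A) *ᵥ x₀` of `ẋ = Ax` converges to `0`. -/
theorem exp_smul_tendsto_zero_of_spectrum_re_neg (n : ℕ)
    (A : Matrix (Fin n) (Fin n) ℂ)
    (hA : ∀ μ ∈ spectrum ℂ A, μ.re < 0) :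
    Tendsto (fun t : ℝ => NormedSpace.exp ((t : ℂ) • A)) atTop (nhds 0) ∧
      ∀ x₀ : Fin n → ℂ,
        Tendsto (fun t : ℝ => (NormedSpace.exp ((t : ℂ) • A)) *ᵥ x₀) atTop (nhds 0) :=
  ⟨tendsto_nhds_zero_of_forall_mulVec (tendsto_exp_smul_mulVec_of_spectrum_re_neg A hA),
    tendsto_exp_smul_mulVec_of_spectrum_re_neg A hA⟩
end
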